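/- If s is a universally convergent basic sequence on the edgeless cube Q_L and f is the terminal labelling obtained by applying s to the identity labelling, then f is a bijection from the set of cells to itself, and f(C) = C for every cell cluster C. The same holds for the edged cube Q̄_L. -/

import Mathlib

universe u v

namespace InfRubik

/-- The three axes of the cube. -/
inductive Axis : Type
  | x | y | z
  deriving DecidableEq

/-- The six colors of the Rubik's cube.  A *configuration* is a map from cells to
`Option Color`, where `none` plays the role of the non-color `NaC`. -/
inductive Color : Type
  | red | white | green | orange | yellow | blue
  deriving DecidableEq

/-- The set `L̄† = -L ∪ {0} ∪ L ∪ {±∞}` of extended coordinates. -/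
inductive ExtCoord (L : Type u) : Type u
  | neg : L → ExtCoord L
  | zero : ExtCoord L
  | pos : L → ExtCoord L
  | negInf : ExtCoord L
  | posInf : ExtCoord L

namespace ExtCoord

variable {L : Type u}

/-- The reflection `r ↦ -r`. -/
def reflect : ExtCoord L → ExtCoord L
  | .neg r => .pos r
  | .zero => .zero
  | .pos r => .neg r
  | .negInf => .posInf
  | .posInf => .negInf

@[simp] theorem reflect_reflect (a : ExtCoord L) : a.reflect.reflect = a := by
  cases a <;> rfl

/-- Whether a coordinate is `±∞`. -/
def isInfB : ExtCoord L → Bool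
  | .negInf => true
  | .posInf => true
  | _ => false

@[simp] theorem isInfB_reflect (a : ExtCoord L) : a.reflect.isInfB = a.isInfB := by
  cases a <;> rfl

/-- Whether a coordinate is `0`. -/
def isZeroB : ExtCoord L → Bool
  | .zero => true
  | _ => false

@[simp] theorem isZeroB_reflect (a : ExtCoord L) : a.reflect.isZeroB = a.isZeroB := by
  cases a <;> rfl

end ExtCoord

/-- A point of the ambient space `L̄† × L̄† × L̄†`. -/
abbrev Triple (L : Type u) := ExtCoord L × ExtCoord L × ExtCoord L

/-- The coordinate of a point along an axis. -/
def Triple.coord {L : Type u} : Axis → Triple L → ExtCoord L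
  | .x, p => p.1
  | .y, p => p.2.1
  | .z, p => p.2.2

/-- Quarter-turn rotation of the ambient space about an axis (right-hand rule). -/
def rot {L : Type u} : Axis → Triple L → Triple L
  | .x, p => (p.1, p.2.2.reflect, p.2.1)
  | .y, p => (p.2.2, p.2.1, p.1.reflect)
  | .z, p => (p.2.1.reflect, p.1, p.2.2)

/-- Inverse quarter-turn rotation of the ambient space about an axis. -/
def rotInv {L : Type u} : Axis → Triple L → Triple L
  | .x, p => (p.1, p.2.2, p.2.1.reflect)
  | .y, p => (p.2.2.reflect, p.2.1, p.1)
  | .z, p => (p.2.1, p.1.reflect, p.2.2)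

@[simp] theorem rotInv_rot {L : Type u} (i : Axis) (p : Triple L) : rotInv i (rot i p) = p := by
  cases i <;> simp [rot, rotInv]

@[simp] theorem rot_rotInv {L : Type u} (i : Axis) (p : Triple L) : rot i (rotInv i p) = p := by
  cases i <;> simp [rot, rotInv]

/-- The number of infinite coordinates of a point. -/
def infCount {L : Type u} (p : Triple L) : ℕ :=
  (if p.1.isInfB then 1 else 0) + (if p.2.1.isInfB then 1 else 0) +
    (if p.2.2.isInfB then 1 else 0)

/-- The number of zero coordinates of a point. -/
def zeroCount {L : Type u} (p : Triple L) : ℕ :=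
  (if p.1.isZeroB then 1 else 0) + (if p.2.1.isZeroB then 1 else 0) +
    (if p.2.2.isZeroB then 1 else 0)

theorem infCount_rot {L : Type u} (i : Axis) (p : Triple L) : infCount (rot i p) = infCount p := by
  obtain ⟨a, b, c⟩ := p
  cases i <;> cases a <;> cases b <;> cases c <;> rfl

theorem infCount_rotInv {L : Type u} (i : Axis) (p : Triple L) :
    infCount (rotInv i p) = infCount p := by
  obtain ⟨a, b, c⟩ := p
  cases i <;> cases a <;> cases b <;> cases c <;> rfl

@[simp] theorem coord_rot_self {L : Type u} (i : Axis) (p : Triple L) :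
    (rot i p).coord i = p.coord i := by
  cases i <;> rfl

@[simp] theorem coord_rotInv_self {L : Type u} (i : Axis) (p : Triple L) :
    (rotInv i p).coord i = p.coord i := by
  cases i <;> rfl

/-- A cell of the *edgeless* cube `Q_L`: a point of the ambient space with exactly one
infinite coordinate. -/
def Cell (L : Type u) : Type u := {p : Triple L // infCount p = 1}

open Classical in
/-- The underlying map on points of the quarter-turn twist `T_{i,α}`. -/
noncomputable def qtTriple {L : Type u} (i : Axis) (α : ExtCoord L) (p : Triple L) : Triple L :=
  if p.coord i = α then rot i p else p

open Classical in
/-- The underlying map on points of the inverse quarter-turn twist `T_{i,α}⁻¹`. -/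
noncomputable def qtTripleInv {L : Type u} (i : Axis) (α : ExtCoord L) (p : Triple L) : Triple L :=
  if p.coord i = α then rotInv i p else p

theorem qtTripleInv_qtTriple {L : Type u} (i : Axis) (α : ExtCoord L) (p : Triple L) :
    qtTripleInv i α (qtTriple i α p) = p := by
  classical
  by_cases h : p.coord i = α <;> simp [qtTriple, qtTripleInv, h]

theorem qtTriple_qtTripleInv {L : Type u} (i : Axis) (α : ExtCoord L) (p : Triple L) :
    qtTriple i α (qtTripleInv i α p) = p := by
  classical
  by_cases h : p.coord i = α <;> simp [qtTriple, qtTripleInv, h]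

theorem infCount_qtTriple {L : Type u} (i : Axis) (α : ExtCoord L) (p : Triple L) :
    infCount (qtTriple i α p) = infCount p := by
  classical
  by_cases h : p.coord i = α <;> simp [qtTriple, h, infCount_rot]

theorem infCount_qtTripleInv {L : Type u} (i : Axis) (α : ExtCoord L) (p : Triple L) :
    infCount (qtTripleInv i α p) = infCount p := by
  classical
  by_cases h : p.coord i = α <;> simp [qtTripleInv, h, infCount_rotInv]

/-- The quarter-turn twist `T_{i,α}` of the edgeless cube, as a permutation of cells. -/
noncomputable def quarterTurn {L : Type u} (i : Axis) (α : ExtCoord L) : Equiv.Perm (Cell L) where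
  toFun c := ⟨qtTriple i α c.1, by rw [infCount_qtTriple]; exact c.2⟩
  invFun c := ⟨qtTripleInv i α c.1, by rw [infCount_qtTripleInv]; exact c.2⟩
  left_inv c := Subtype.ext (qtTripleInv_qtTriple i α c.1)
  right_inv c := Subtype.ext (qtTriple_qtTripleInv i α c.1)

/-- The basic twists of the edgeless cube: quarter turns, half turns and reverse
quarter turns of a single layer. -/
def IsBasic (L : Type u) (π : Equiv.Perm (Cell L)) : Prop :=
  ∃ (i : Axis) (α : ExtCoord L),
    π = quarterTurn i α ∨ π = quarterTurn i α ^ 2 ∨ π = (quarterTurn i α)⁻¹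

/-! ### The edged cube -/

/-- How a quarter-turn about axis `i` transports the face tag of a cell. -/
def tagMap : Axis → Axis → Axis
  | .x, .x => .x
  | .x, .y => .z
  | .x, .z => .y
  | .y, .x => .z
  | .y, .y => .y
  | .y, .z => .x
  | .z, .x => .y
  | .z, .y => .x
  | .z, .z => .z

@[simp] theorem tagMap_tagMap (i j : Axis) : tagMap i (tagMap i j) = j := by
  cases i <;> cases j <;> rfl

theorem isInfB_coord_tagMap_rot {L : Type u} (i j : Axis) (p : Triple L) :
    ((rot i p).coord (tagMap i j)).isInfB = (p.coord j).isInfB := by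
  cases i <;> cases j <;> simp [rot, Triple.coord, tagMap]

theorem isInfB_coord_tagMap_rotInv {L : Type u} (i j : Axis) (p : Triple L) :
    ((rotInv i p).coord (tagMap i j)).isInfB = (p.coord j).isInfB := by
  cases i <;> cases j <;> simp [rotInv, Triple.coord, tagMap]

/-- A cell of the *edged* cube `Q̄_L`: a point of the ambient space together with a tag
naming an axis, such that the coordinate along the tagged axis is infinite (the tag
indicates the face to which the cell belongs). -/
def ECell (L : Type u) : Type u := {q : Triple L × Axis // (q.1.coord q.2).isInfB = true}

open Classical in
/-- The underlying map of the quarter-turn twist `T_{i,α}` of the edged cube. -/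
noncomputable def eqtFun {L : Type u} (i : Axis) (α : ExtCoord L) (q : Triple L × Axis) :
    Triple L × Axis :=
  if q.1.coord i = α then (rot i q.1, tagMap i q.2) else q

open Classical in
/-- The underlying map of the reverse quarter-turn twist of the edged cube. -/
noncomputable def eqtFunInv {L : Type u} (i : Axis) (α : ExtCoord L) (q : Triple L × Axis) :
    Triple L × Axis :=
  if q.1.coord i = α then (rotInv i q.1, tagMap i q.2) else q

theorem eqtFunInv_eqtFun {L : Type u} (i : Axis) (α : ExtCoord L) (q : Triple L × Axis) :
    eqtFunInv i α (eqtFun i α q) = q := by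
  classical
  by_cases h : q.1.coord i = α <;> simp [eqtFun, eqtFunInv, h]

theorem eqtFun_eqtFunInv {L : Type u} (i : Axis) (α : ExtCoord L) (q : Triple L × Axis) :
    eqtFun i α (eqtFunInv i α q) = q := by
  classical
  by_cases h : q.1.coord i = α <;> simp [eqtFun, eqtFunInv, h]

theorem isInfB_eqtFun {L : Type u} (i : Axis) (α : ExtCoord L) (q : Triple L × Axis) :
    (((eqtFun i α q).1.coord (eqtFun i α q).2)).isInfB = ((q.1.coord q.2)).isInfB := by
  classical
  by_cases h : q.1.coord i = α <;> simp [eqtFun, h, isInfB_coord_tagMap_rot]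

theorem isInfB_eqtFunInv {L : Type u} (i : Axis) (α : ExtCoord L) (q : Triple L × Axis) :
    (((eqtFunInv i α q).1.coord (eqtFunInv i α q).2)).isInfB = ((q.1.coord q.2)).isInfB := by
  classical
  by_cases h : q.1.coord i = α <;> simp [eqtFunInv, h, isInfB_coord_tagMap_rotInv]

/-- The quarter-turn twist `T_{i,α}` of the edged cube, as a permutation of cells.  A face
twist moves, besides the cells of its face, also the coupled edge and corner cells of the
adjacent faces lying in the twisted layer. -/
noncomputable def equarterTurn {L : Type u} (i : Axis) (α : ExtCoord L) :
    Equiv.Perm (ECell L) where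
  toFun c := ⟨eqtFun i α c.1, by rw [isInfB_eqtFun]; exact c.2⟩
  invFun c := ⟨eqtFunInv i α c.1, by rw [isInfB_eqtFunInv]; exact c.2⟩
  left_inv c := Subtype.ext (eqtFunInv_eqtFun i α c.1)
  right_inv c := Subtype.ext (eqtFun_eqtFunInv i α c.1)

/-- The basic twists of the edged cube. -/
def IsEBasic (L : Type u) (π : Equiv.Perm (ECell L)) : Prop :=
  ∃ (i : Axis) (α : ExtCoord L),
    π = equarterTurn i α ∨ π = equarterTurn i α ^ 2 ∨ π = (equarterTurn i α)⁻¹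

/-! ### Transfinite sequences of twists and their action on labellings -/

open Classical in
/-- The eventual value of an ordinal-indexed family of `Option`-values: `some v` if the family
stabilizes on `some v` before `lam`, and `none` otherwise. -/
noncomputable def eventualVal {X : Type u} (lam : Ordinal.{v})
    (g : ∀ η, η < lam → Option X) : Option X :=
  if h : ∃ v : X, ∃ γ, γ < lam ∧ ∀ η (hη : η < lam), γ ≤ η → g η hη = some v
  then some h.choose else none

/-- Applying an ordinal-indexed sequence of permutations to an initial labelling:
`run σ f0 θ` is the labelling obtained after the first `θ` moves, with
`f_{η+1}(c) = f_η(σ_η⁻¹ c)` at successors and the eventual value (or `NaC = none`)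
at limits. -/
noncomputable def run {Cl : Type v} {X : Type u} (σ : Ordinal.{v} → Equiv.Perm Cl)
    (f0 : Cl → Option X) (θ : Ordinal.{v}) : Cl → Option X :=
  Ordinal.limitRecOn (motive := fun _ => Cl → Option X) θ f0
    (fun η fη c => fη ((σ η)⁻¹ c))
    (fun lam _ prev c => eventualVal lam (fun η h => prev η h c))

/-- A (transfinite) sequence of twists of length `len`, each of which satisfies the
predicate `B` (being a basic twist). -/
structure TwistSeq (Cl : Type v) (B : Equiv.Perm Cl → Prop) : Type (v + 1) where
  len : Ordinal.{v}
  seq : Ordinal.{v} → Equiv.Perm Cl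
  basic : ∀ η, η < len → B (seq η)

namespace TwistSeq

variable {Cl : Type v} {B : Equiv.Perm Cl → Prop}

/-- The terminal labelling obtained by applying a sequence of twists to `f0`. -/
noncomputable def terminal (s : TwistSeq Cl B) {X : Type u} (f0 : Cl → Option X) :
    Cl → Option X :=
  run s.seq f0 s.len

/-- A sequence of twists is convergent over `f0` if the terminal labelling is legal,
i.e. never takes the value `NaC = none`. -/
def ConvOver (s : TwistSeq Cl B) {X : Type u} (f0 : Cl → Option X) : Prop :=
  ∀ c, s.terminal f0 c ≠ none

/-- A sequence of twists is universally convergent if it is convergent over the identity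
labelling. -/
def UnivConv (s : TwistSeq Cl B) : Prop := s.ConvOver (fun c => some c)

/-- A sequence is twist-finite if each twist occurs in it only finitely many times. -/
def TwistFinite (s : TwistSeq Cl B) : Prop :=
  ∀ π : Equiv.Perm Cl, {η : Ordinal | η < s.len ∧ s.seq η = π}.Finite

/-- Two sequences are equivalent, `σ⃗ ∼ τ⃗`, when they produce the same terminal
configuration over every initial configuration. -/
def Sim (s t : TwistSeq Cl B) : Prop :=
  ∀ f : Cl → Option Color, s.terminal f = t.terminal f

/-- Concatenation of twist sequences: `s.concat t` performs `s` and then `t`. -/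
noncomputable def concat (s t : TwistSeq Cl B) : TwistSeq Cl B where
  len := s.len + t.len
  seq := fun η => if η < s.len then s.seq η else t.seq (η - s.len)
  basic := by
    intro η hη
    by_cases h : η < s.len
    · simpa [h] using s.basic η h
    · have hc : 0 < t.len := by
        rcases eq_zero_or_pos t.len with h0 | h0
        · rw [h0, add_zero] at hη; exact absurd hη h
        · exact h0
      have h2 : η - s.len < t.len := Ordinal.sub_lt_of_lt_add hη hc
      simpa [h] using t.basic _ h2

/-- The empty sequence of twists. -/
def empty (Cl : Type v) (B : Equiv.Perm Cl → Prop) : TwistSeq Cl B where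
  len := 0
  seq := fun _ => 1
  basic := fun η hη => absurd hη (by simp)

/-- `n`-fold self-concatenation of a sequence of twists. -/
noncomputable def npow (s : TwistSeq Cl B) : ℕ → TwistSeq Cl B
  | 0 => empty Cl B
  | n + 1 => (npow s n).concat s

end TwistSeq

/-- Basic sequences of twists of the edgeless cube `Q_L`. -/
abbrev BasicSeq (L : Type u) := TwistSeq (Cell L) (IsBasic L)

/-- Basic sequences of twists of the edged cube `Q̄_L`. -/
abbrev EBasicSeq (L : Type u) := TwistSeq (ECell L) (IsEBasic L)

/-- `f` is accessible from `f0` when some basic sequence applied to `f0` is convergent with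
terminal configuration `f`. -/
def Accessible {Cl : Type v} (B : Equiv.Perm Cl → Prop) (f0 f : Cl → Option Color) : Prop :=
  ∃ s : TwistSeq Cl B, s.ConvOver f0 ∧ s.terminal f0 = f

/-- A labelling is legal if it never takes the value `NaC = none`. -/
def IsLegal {Cl : Type v} {X : Type u} (f : Cl → Option X) : Prop := ∀ c, f c ≠ none

/-! ### Clusters, faces, and distinguished configurations -/

/-- The group of permutations of cells of the edgeless cube generated by the basic twists. -/
def twistGroup (L : Type u) : Subgroup (Equiv.Perm (Cell L)) :=
  Subgroup.closure {π | IsBasic L π}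

/-- The cluster of a cell of the edgeless cube: its orbit under the group generated by the
basic twists. -/
def cluster {L : Type u} (c : Cell L) : Set (Cell L) :=
  {d | ∃ g ∈ twistGroup L, g c = d}

/-- The group of permutations of cells of the edged cube generated by the basic twists. -/
def etwistGroup (L : Type u) : Subgroup (Equiv.Perm (ECell L)) :=
  Subgroup.closure {π | IsEBasic L π}

/-- The cluster of a cell of the edged cube. -/
def ecluster {L : Type u} (c : ECell L) : Set (ECell L) :=
  {d | ∃ g ∈ etwistGroup L, g c = d}

open Classical in
/-- The solved configuration of the edgeless cube: each face gets one of six distinct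
colors. -/
noncomputable def fSolved (L : Type u) : Cell L → Option Color := fun c =>
  if c.1.1 = ExtCoord.posInf then some .red
  else if c.1.1 = ExtCoord.negInf then some .orange
  else if c.1.2.1 = ExtCoord.posInf then some .blue
  else if c.1.2.1 = ExtCoord.negInf then some .green
  else if c.1.2.2 = ExtCoord.posInf then some .white
  else some .yellow

/-- The color of each face: the face is named by the axis and the sign (`true` = `+∞`). -/
def faceColor : Axis → Bool → Color
  | .x, true => .red
  | .x, false => .orange
  | .y, true => .blue
  | .y, false => .green
  | .z, true => .white
  | .z, false => .yellow

open Classical in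
/-- The solved configuration of the edged cube. -/
noncomputable def efSolved (L : Type u) : ECell L → Option Color := fun c =>
  if c.1.1.coord c.1.2 = ExtCoord.posInf then some (faceColor c.1.2 true)
  else some (faceColor c.1.2 false)

/-- A center cell of the edgeless cube: two of its coordinates are `0`. -/
def IsCenter {L : Type u} (c : Cell L) : Prop := zeroCount c.1 = 2

/-- The global rotation of the whole cube about an axis, as a permutation of the cells of
the edgeless cube. -/
def rotAllPerm {L : Type u} (i : Axis) : Equiv.Perm (Cell L) where
  toFun c := ⟨rot i c.1, by rw [infCount_rot]; exact c.2⟩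
  invFun c := ⟨rotInv i c.1, by rw [infCount_rotInv]; exact c.2⟩
  left_inv c := Subtype.ext (rotInv_rot i c.1)
  right_inv c := Subtype.ext (rot_rotInv i c.1)

/-- The group of global rotations of the edgeless cube. -/
def rotGroup (L : Type u) : Subgroup (Equiv.Perm (Cell L)) :=
  Subgroup.closure (Set.range (rotAllPerm (L := L)))

/-- A configuration of the edgeless cube is standard if every non-center cluster contains
exactly four cells of each of the six colors, and its restriction to the center cluster is
obtained from the solved configuration by a global rotation of the cube. -/
def Standard {L : Type u} (f : Cell L → Option Color) : Prop :=
  (∀ c : Cell L, ¬IsCenter c → ∀ γ : Color, {d ∈ cluster c | f d = some γ}.ncard = 4) ∧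
  ∃ g ∈ rotGroup L, ∀ d : Cell L, IsCenter d → f d = fSolved L (g⁻¹ d)

/-- A configuration is invariant under all quarter-turn face twists. -/
def FaceInvariant {L : Type u} (f : Cell L → Option Color) : Prop :=
  ∀ (i : Axis) (α : ExtCoord L), α.isInfB = true →
    ∀ c : Cell L, f ((quarterTurn i α)⁻¹ c) = f c

/-! ### Quadrants and cluster configurations -/

/-- The upper-right quadrant `D` of the Front face: the cells `(x, y, +∞)` with `x ∈ L`
and `y ∈ {0} ∪ L`; every non-center cluster has a unique representative in `D`. -/
def Dset (L : Type u) : Set (Cell L) :=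
  {c | ∃ (a : L) (b : ExtCoord L), (b = ExtCoord.zero ∨ ∃ r : L, b = ExtCoord.pos r) ∧
    c.1 = (ExtCoord.pos a, b, ExtCoord.posInf)}

/-- Two cells lie in the same face quadrant (an image of `D` under a global rotation). -/
def SameQuadrant {L : Type u} (d d' : Cell L) : Prop :=
  ∃ g ∈ rotGroup L, d ∈ (fun c => g c) '' Dset L ∧ d' ∈ (fun c => g c) '' Dset L

/-! ### Coupled cells of the edged cube -/

/-- Two cells of the edged cube are coupled if they occupy the same location but belong to
different faces (they are parts of a common edge or corner cubie). -/
def Coupled {L : Type u} (c c' : ECell L) : Prop := c.1.1 = c'.1.1 ∧ c.1.2 ≠ c'.1.2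

/-- An edge cell: exactly two infinite coordinates. -/
def IsEdgeCell {L : Type u} (c : ECell L) : Prop := infCount c.1.1 = 2

/-- A corner cell: three infinite coordinates. -/
def IsCornerCell {L : Type u} (c : ECell L) : Prop := infCount c.1.1 = 3

/-- An edge-cross cell: an edge cell one of whose coordinates is `0`. -/
def IsEdgeCross {L : Type u} (c : ECell L) : Prop :=
  IsEdgeCell c ∧ 0 < zeroCount c.1.1

end InfRubik

/-!
A transfinite induction shows that every intermediate labelling obtained from the identity
labelling is a partial injection sending each cell into its own cluster: twists are injective
and preserve clusters, and at a limit stage any two defined values are already attained at a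
common earlier stage. A universally convergent sequence therefore ends in an injection mapping
each cluster into itself, which is a bijection on it because clusters are finite. Clusters are
finite because a twist moves a point only by permuting and reflecting its coordinates.
-/

open MulAction
open scoped Pointwise

namespace InfRubik

section Run

variable {Cl : Type v} {X : Type u}

theorem run_zero (σ : Ordinal.{v} → Equiv.Perm Cl) (f0 : Cl → Option X) : run σ f0 0 = f0 :=
  Ordinal.limitRecOn_zero _ _ _

theorem run_succ (σ : Ordinal.{v} → Equiv.Perm Cl) (f0 : Cl → Option X) (η : Ordinal.{v}) :
    run σ f0 (η + 1) = fun c => run σ f0 η ((σ η)⁻¹ c) :=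
  Ordinal.limitRecOn_add_one _ _ _ _

theorem run_limit (σ : Ordinal.{v} → Equiv.Perm Cl) (f0 : Cl → Option X) {lam : Ordinal.{v}}
    (h : Order.IsSuccLimit lam) :
    run σ f0 lam = fun c => eventualVal lam (fun η _ => run σ f0 η c) :=
  Ordinal.limitRecOn_limit _ _ _ _ h

theorem exists_of_eventualVal_eq_some {lam : Ordinal.{v}} {g : ∀ η, η < lam → Option X} {x : X}
    (h : eventualVal lam g = some x) :
    ∃ γ < lam, ∀ η (hη : η < lam), γ ≤ η → g η hη = some x := by
  classical
  unfold eventualVal at h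
  split_ifs at h with hex
  obtain rfl := Option.some_injective _ h
  exact hex.choose_spec

theorem rel_of_run_eq_some {R : Cl → Cl → X → X → Prop} (σ : Ordinal.{v} → Equiv.Perm Cl)
    (f0 : Cl → Option X) (θ : Ordinal.{v})
    (h0 : ∀ c c' x x', f0 c = some x → f0 c' = some x' → R c c' x x')
    (hstep : ∀ η < θ, ∀ c c' x x', R ((σ η)⁻¹ c) ((σ η)⁻¹ c') x x' → R c c' x x')
    {c c' : Cl} {x x' : X} (hc : run σ f0 θ c = some x) (hc' : run σ f0 θ c' = some x') :
    R c c' x x' := by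
  induction θ using Ordinal.limitRecOn generalizing c c' x x' with
  | zero =>
    rw [run_zero] at hc hc'
    exact h0 c c' x x' hc hc'
  | add_one η ih =>
    rw [run_succ] at hc hc'
    have hη : η < η + 1 := Order.lt_add_one_iff.mpr le_rfl
    exact hstep η hη c c' x x' (ih (fun ζ hζ => hstep ζ (hζ.trans hη)) hc hc')
  | limit lam hlim ih =>
    rw [run_limit _ _ hlim] at hc hc'
    obtain ⟨γ, hγ, hγx⟩ := exists_of_eventualVal_eq_some hc
    obtain ⟨γ', hγ', hγx'⟩ := exists_of_eventualVal_eq_some hc'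
    have hmax : max γ γ' < lam := max_lt hγ hγ'
    exact ih _ hmax (fun ζ hζ => hstep ζ (hζ.trans hmax))
      (hγx _ hmax (le_max_left _ _)) (hγx' _ hmax (le_max_right _ _))

theorem eq_of_run_eq_some (σ : Ordinal.{v} → Equiv.Perm Cl) {f0 : Cl → Option X}
    (hf0 : ∀ c c' x, f0 c = some x → f0 c' = some x → c = c') (θ : Ordinal.{v}) {c c' : Cl}
    {x : X} (hc : run σ f0 θ c = some x) (hc' : run σ f0 θ c' = some x) : c = c' :=
  rel_of_run_eq_some (R := fun c c' x x' => x = x' → c = c') σ f0 θ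
    (fun c c' x _ h h' hx => hf0 c c' x h (hx ▸ h'))
    (fun η _ _ _ _ _ h hx => (σ η)⁻¹.injective (h hx)) hc hc' rfl

theorem run_id_mem_orbit {G : Subgroup (Equiv.Perm Cl)} {σ : Ordinal.{v} → Equiv.Perm Cl}
    {θ : Ordinal.{v}} (hσ : ∀ η < θ, σ η ∈ G) {c d : Cl}
    (hc : run σ (fun a => some a) θ c = some d) : d ∈ orbit G c :=
  rel_of_run_eq_some (R := fun c _ d _ => d ∈ orbit G c) σ _ θ
    (fun c _ _ _ h _ => Option.some_injective _ h ▸ mem_orbit_self c)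
    (fun η hη c _ _ _ h => orbit_smul (⟨σ η, hσ η hη⟩⁻¹ : G) c ▸ h) hc hc

end Run

theorem orbit_subgroup_eq_setOf {Cl : Type v} (G : Subgroup (Equiv.Perm Cl)) (c : Cl) :
    orbit G c = {d | ∃ g ∈ G, g c = d} := by
  ext d
  simp [mem_orbit_iff, Subgroup.smul_def, Equiv.Perm.smul_def]

theorem image_orbit_eq_of_injective {G α : Type*} [Group G] [MulAction G α] {e : α → α}
    (he : e.Injective) (hmem : ∀ a : α, e a ∈ orbit G a) (hfin : ∀ a : α, (orbit G a).Finite)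
    (a : α) : e '' orbit G a = orbit G a := by
  have hmaps : Set.MapsTo e (orbit G a) (orbit G a) := fun b hb =>
    orbit_eq_iff.mpr hb ▸ hmem b
  exact ((hfin a).injOn_iff_bijOn_of_mapsTo hmaps).mp he.injOn |>.image_eq

theorem orbit_closure_subset {G α : Type*} [Group G] [MulAction G α] {s : Set G} {S : Set α}
    (hs : s ⊆ stabilizer G S) {a : α} (ha : a ∈ S) : orbit (Subgroup.closure s) a ⊆ S := by
  rintro _ ⟨g, rfl⟩
  have hg : (g : G) • S = S := (Subgroup.closure_le _ |>.mpr hs) g.2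
  exact hg ▸ Set.smul_mem_smul_set ha

theorem TwistSeq.exists_bijective_of_univConv {Cl : Type v} {B : Equiv.Perm Cl → Prop}
    (s : TwistSeq Cl B) (hs : s.UnivConv) {G : Subgroup (Equiv.Perm Cl)}
    (hG : ∀ η < s.len, s.seq η ∈ G) (hfin : ∀ c : Cl, (orbit G c).Finite) :
    ∃ e : Cl → Cl, e.Bijective ∧ (∀ c, s.terminal (fun a => some a) c = some (e c)) ∧
      ∀ c : Cl, e '' orbit G c = orbit G c := by
  choose e he using fun c => Option.ne_none_iff_exists'.mp (hs c)
  have hinj : e.Injective := fun c c' h =>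
    eq_of_run_eq_some s.seq (fun c c' x h h' => (Option.some_injective _ h).trans
      (Option.some_injective _ h').symm) s.len (he c) (h ▸ he c')
  have himage := image_orbit_eq_of_injective hinj (fun c => run_id_mem_orbit hG (he c)) hfin
  refine ⟨e, ⟨hinj, fun d => ?_⟩, he, himage⟩
  obtain ⟨c, -, hc⟩ := (himage d).symm ▸ mem_orbit_self d
  exact ⟨c, hc⟩

section Finiteness

instance : Fintype Axis := ⟨{.x, .y, .z}, fun i => by cases i <;> simp⟩

variable {L : Type u} {A : Set (ExtCoord L)}

theorem rot_mem_prod_iff (hA : ∀ a, a.reflect ∈ A ↔ a ∈ A) (i : Axis) (p : Triple L) :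
    rot i p ∈ A ×ˢ A ×ˢ A ↔ p ∈ A ×ˢ A ×ˢ A := by
  cases i <;> simp only [rot, Set.mem_prod, hA] <;> tauto

theorem qtTriple_mem_prod_iff (hA : ∀ a, a.reflect ∈ A ↔ a ∈ A) (i : Axis) (α : ExtCoord L)
    (p : Triple L) : qtTriple i α p ∈ A ×ˢ A ×ˢ A ↔ p ∈ A ×ˢ A ×ˢ A := by
  classical
  unfold qtTriple
  split_ifs
  exacts [rot_mem_prod_iff hA i p, Iff.rfl]

theorem exists_finite_reflect_closed (p : Triple L) :
    ∃ A : Set (ExtCoord L), A.Finite ∧ (∀ a, a.reflect ∈ A ↔ a ∈ A) ∧ p ∈ A ×ˢ A ×ˢ A := by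
  let s : Set (ExtCoord L) := {p.1, p.2.1, p.2.2}
  have hinj : Function.Injective (ExtCoord.reflect (L := L)) :=
    Function.LeftInverse.injective ExtCoord.reflect_reflect
  refine ⟨s ∪ ExtCoord.reflect ⁻¹' s, (Set.toFinite s).union ((Set.toFinite s).preimage
    hinj.injOn), fun a => ?_, by simp [s]⟩
  simp only [Set.mem_union, Set.mem_preimage, ExtCoord.reflect_reflect, or_comm]

theorem IsBasic.mem_stabilizer (hA : ∀ a, a.reflect ∈ A ↔ a ∈ A) {π : Equiv.Perm (Cell L)}
    (hπ : IsBasic L π) :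
    π ∈ stabilizer (Equiv.Perm (Cell L)) {c : Cell L | c.1 ∈ A ×ˢ A ×ˢ A} := by
  have hquarter (i : Axis) (α : ExtCoord L) :
      quarterTurn i α ∈ stabilizer (Equiv.Perm (Cell L)) {c : Cell L | c.1 ∈ A ×ˢ A ×ˢ A} :=
    mem_stabilizer_set.mpr fun c => qtTriple_mem_prod_iff hA i α c.1
  obtain ⟨i, α, rfl | rfl | rfl⟩ := hπ
  exacts [hquarter i α, pow_mem (hquarter i α) 2, inv_mem (hquarter i α)]

theorem IsEBasic.mem_stabilizer (hA : ∀ a, a.reflect ∈ A ↔ a ∈ A) {π : Equiv.Perm (ECell L)}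
    (hπ : IsEBasic L π) :
    π ∈ stabilizer (Equiv.Perm (ECell L)) {c : ECell L | c.1.1 ∈ A ×ˢ A ×ˢ A} := by
  have hquarter (i : Axis) (α : ExtCoord L) :
      equarterTurn i α ∈
        stabilizer (Equiv.Perm (ECell L)) {c : ECell L | c.1.1 ∈ A ×ˢ A ×ˢ A} := by
    refine mem_stabilizer_set.mpr fun c => ?_
    have hfst : (equarterTurn i α c).1.1 = qtTriple i α c.1.1 := by
      classical
      change (eqtFun i α c.1).1 = _
      unfold eqtFun qtTriple
      split_ifs <;> rfl
    simpa only [Equiv.Perm.smul_def, Set.mem_ofPred_eq, hfst] using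
      qtTriple_mem_prod_iff hA i α c.1.1
  obtain ⟨i, α, rfl | rfl | rfl⟩ := hπ
  exacts [hquarter i α, pow_mem (hquarter i α) 2, inv_mem (hquarter i α)]

theorem cluster_eq_orbit (c : Cell L) : cluster c = orbit (twistGroup L) c :=
  (orbit_subgroup_eq_setOf _ c).symm

theorem ecluster_eq_orbit (c : ECell L) : ecluster c = orbit (etwistGroup L) c :=
  (orbit_subgroup_eq_setOf _ c).symm

theorem cluster_finite (c : Cell L) : (cluster c).Finite := by
  obtain ⟨A, hAfin, hA, hc⟩ := exists_finite_reflect_closed c.1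
  have hS : {d : Cell L | d.1 ∈ A ×ˢ A ×ˢ A}.Finite :=
    (hAfin.prod (hAfin.prod hAfin)).preimage Subtype.val_injective.injOn
  rw [cluster_eq_orbit]
  exact hS.subset (orbit_closure_subset (fun _ => IsBasic.mem_stabilizer hA) hc)

theorem ecluster_finite (c : ECell L) : (ecluster c).Finite := by
  obtain ⟨A, hAfin, hA, hc⟩ := exists_finite_reflect_closed c.1.1
  have hS : {d : ECell L | d.1.1 ∈ A ×ˢ A ×ˢ A}.Finite :=
    ((hAfin.prod (hAfin.prod hAfin)).prod (Set.toFinite Set.univ)).preimage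
      Subtype.val_injective.injOn |>.subset fun d hd => ⟨hd, trivial⟩
  rw [ecluster_eq_orbit]
  exact hS.subset (orbit_closure_subset (fun _ => IsEBasic.mem_stabilizer hA) hc)

end Finiteness

end InfRubik

open InfRubik in
theorem univConv_bijective_clusters_general {L : Type u} :
    (∀ s : BasicSeq L, s.UnivConv →
      ∃ e : Cell L → Cell L, Function.Bijective e ∧
        (∀ c, s.terminal (fun a => some a) c = some (e c)) ∧
        (∀ c, e '' cluster c = cluster c)) ∧
    (∀ s : EBasicSeq L, s.UnivConv →
      ∃ e : ECell L → ECell L, Function.Bijective e ∧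
        (∀ c, s.terminal (fun a => some a) c = some (e c)) ∧
        (∀ c, e '' ecluster c = ecluster c)) := by
  refine ⟨fun s hs => ?_, fun s hs => ?_⟩
  · simp_rw [cluster_eq_orbit]
    exact s.exists_bijective_of_univConv hs (fun η hη => Subgroup.subset_closure (s.basic η hη))
      fun c => cluster_eq_orbit c ▸ cluster_finite c
  · simp_rw [ecluster_eq_orbit]
    exact s.exists_bijective_of_univConv hs (fun η hη => Subgroup.subset_closure (s.basic η hη))
      fun c => ecluster_eq_orbit c ▸ ecluster_finite c

open InfRubik in
/-- A universally convergent basic sequence applied to the identity labelling yields a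
bijection of the set of cells fixing every cluster setwise; the same holds for the edged
cube. -/
theorem univConv_bijective_clusters {L : Type u} [Infinite L] :
    (∀ s : BasicSeq L, s.UnivConv →
      ∃ e : Cell L → Cell L, Function.Bijective e ∧
        (∀ c, s.terminal (fun a => some a) c = some (e c)) ∧
        (∀ c, e '' cluster c = cluster c)) ∧
    (∀ s : EBasicSeq L, s.UnivConv →
      ∃ e : ECell L → ECell L, Function.Bijective e ∧
        (∀ c, s.terminal (fun a => some a) c = some (e c)) ∧
        (∀ c, e '' ecluster c = ecluster c)) :=
  univConv_bijective_clusters_general
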